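/- For the degree-approximation algorithm: let y_{i,j} be the indicator that |V_{i,j} ∩ Γ(v)| is odd, where each neighbor u independently satisfies u ∈ V_{i,j} (i.e., r_i(u) > j) with probability 2^{-j}. Then for each i, P(y_{i,j} = 1) = (1 − (1 − 2^{-j+1})^{d})/2 where d = deg(v). Consequently E[SUM(j,v)] = a·(1 − (1 − 2^{-j+1})^{d})/2 where SUM(j,v) = Σ_{i=1}^{a} y_{i,j}. -/

import Mathlib

/-!
Write `N(ω)` for the number of coins showing `true`. Since `[N odd] = (1 - (-1)^N) / 2` and
`(-1)^N = ∏ᵤ (-1)^[ω u]` factors over the independent coins, each of mean `1 - 2p`, the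
parity is odd with probability `(1 - (1 - 2p)^d) / 2`, where `p = 2^{-j}`. Every row of the
`a × d` array of coins is again distributed as the product measure on `Γ`, so by linearity
the expected number of odd rows is `a` times that probability.
-/

open MeasureTheory ProbabilityTheory Finset

noncomputable def bernTwoPow (j : ℕ) : Measure Bool :=
  (PMF.bernoulli ((1 / 2 : NNReal) ^ j) (pow_le_one₀ (by norm_num) (by norm_num))).toMeasure

instance (j : ℕ) : IsProbabilityMeasure (bernTwoPow j) := by
  unfold bernTwoPow; infer_instance

lemma measureReal_bernTwoPow_true (j : ℕ) : (bernTwoPow j).real {true} = (1 / 2) ^ j := by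
  simp [bernTwoPow, measureReal_def, PMF.bernoulli_apply]

theorem measurePreserving_row {ι κ α : Type*} [Fintype ι] [Fintype κ] [MeasurableSpace α]
    (μ : Measure α) [IsProbabilityMeasure μ] (i : ι) :
    MeasurePreserving (fun (ω : ι × κ → α) u => ω (i, u))
      (Measure.pi fun _ => μ) (Measure.pi fun _ => μ) where
  measurable := measurable_pi_lambda _ fun u => measurable_pi_apply (i, u)
  map_eq := by
    classical
    refine (Measure.pi_eq fun s hs => ?_).symm
    have hrow : (fun (ω : ι × κ → α) u => ω (i, u)) ⁻¹' Set.univ.pi s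
        = Set.univ.pi fun x => if x.1 = i then s x.2 else Set.univ := by
      ext ω
      simp only [Set.mem_preimage, Set.mem_univ_pi, Prod.forall]
      exact ⟨fun h a b => by
        split_ifs with ha
        exacts [ha ▸ h b, trivial], fun h b => by simpa using h i b⟩
    rw [Measure.map_apply (measurable_pi_lambda _ fun u => measurable_pi_apply (i, u))
      (.univ_pi hs), hrow, Measure.pi_pi, Fintype.prod_prod_type]
    simp [apply_ite μ, Finset.prod_ite_eq']

theorem integral_card_rows {ι κ α : Type*} [Fintype ι] [Fintype κ] [MeasurableSpace α]
    (μ : Measure α) [IsProbabilityMeasure μ] (P : (κ → α) → Prop) [DecidablePred P]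
    (hP : MeasurableSet {ξ | P ξ}) :
    ∫ ω : ι × κ → α, (#{i | P fun u => ω (i, u)} : ℝ) ∂(Measure.pi fun _ => μ)
      = Fintype.card ι * (Measure.pi fun _ : κ => μ).real {ξ | P ξ} := by
  have hrow (i : ι) := measurePreserving_row (κ := κ) μ i
  have hind (ω : ι × κ → α) : (#{i | P fun u => ω (i, u)} : ℝ)
      = ∑ i, ((fun (ω : ι × κ → α) u => ω (i, u)) ⁻¹' {ξ | P ξ}).indicator 1 ω := by
    rw [Finset.natCast_card_filter]
    exact Finset.sum_congr rfl fun i _ => by simp [Set.indicator_apply]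
  simp_rw [hind]
  rw [integral_finsetSum _ fun i _ => (integrable_const 1).indicator ((hrow i).measurable hP)]
  simp_rw [integral_indicator_one ((hrow _).measurable hP),
    (hrow _).measureReal_preimage hP.nullMeasurableSet]
  simp

theorem measureReal_pi_odd_card {Γ : Type*} [Fintype Γ] (μ : Measure Bool)
    [IsProbabilityMeasure μ] :
    (Measure.pi fun _ : Γ => μ).real {ω | Odd #{u | ω u = true}}
      = (1 - (1 - 2 * μ.real {true}) ^ Fintype.card Γ) / 2 := by
  let σ : Bool → ℝ := fun b => if b then -1 else 1
  have hsign (ω : Γ → Bool) : (-1 : ℝ) ^ #{u | ω u = true} = ∏ u, σ (ω u) := by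
    rw [Finset.prod_ite, Finset.prod_const, Finset.prod_const_one, mul_one]
  have hodd (ω : Γ → Bool) :
      {ω : Γ → Bool | Odd #{u | ω u = true}}.indicator 1 ω = (1 - ∏ u, σ (ω u)) / 2 := by
    rw [← hsign]
    rcases Nat.even_or_odd #{u | ω u = true} with h | h
    · simp [h.neg_one_pow, Nat.not_odd_iff_even.mpr h]
    · simp [h.neg_one_pow, h]
  have hσ : ∫ b, σ b ∂μ = 1 - 2 * μ.real {true} := by
    have hfalse : μ.real {false} = 1 - μ.real {true} := by
      rw [← Bool.not_true, ← Bool.compl_singleton, probReal_compl_eq_one_sub (.singleton _)]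
    simp [integral_fintype, σ, hfalse]
    ring
  calc _ = ∫ ω, {ω : Γ → Bool | Odd #{u | ω u = true}}.indicator 1 ω
          ∂(Measure.pi fun _ => μ) :=
        (integral_indicator_one (Set.toFinite _).measurableSet).symm
    _ = ∫ ω : Γ → Bool, (1 - ∏ u, σ (ω u)) / 2 ∂(Measure.pi fun _ => μ) := by
        simp_rw [hodd]
    _ = (1 - (∫ b, σ b ∂μ) ^ Fintype.card Γ) / 2 := by
      rw [integral_div, integral_sub (integrable_const 1) .of_finite, integral_const,
        integral_fintype_prod_eq_pow]
      simp
    _ = _ := by rw [hσ]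

theorem degree_approx_parity_expectation_general (Γ : Type*) [Fintype Γ] (d a j : ℕ)
    (hd : d = Fintype.card Γ) :
    (Measure.pi fun _ : Γ => bernTwoPow j)
        {ω | Odd (Finset.univ.filter (fun u : Γ => ω u = true)).card}
      = ENNReal.ofReal ((1 - (1 - (2 : ℝ) ^ (1 - (j : ℝ))) ^ d) / 2) ∧
    (∫ ω : Fin a × Γ → Bool,
        ((Finset.univ.filter (fun i : Fin a =>
          Odd (Finset.univ.filter (fun u : Γ => ω (i, u) = true)).card)).card : ℝ)
        ∂(Measure.pi fun _ : Fin a × Γ => bernTwoPow j))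
      = (a : ℝ) * ((1 - (1 - (2 : ℝ) ^ (1 - (j : ℝ))) ^ d) / 2) := by
  have hrpow : (2 : ℝ) ^ (1 - (j : ℝ)) = 2 * (bernTwoPow j).real {true} := by
    rw [measureReal_bernTwoPow_true, Real.rpow_sub two_pos, Real.rpow_one, Real.rpow_natCast,
      one_div, inv_pow, div_eq_mul_inv]
  rw [hrpow, hd, ← measureReal_pi_odd_card]
  refine ⟨(ofReal_measureReal).symm, ?_⟩
  simpa using integral_card_rows (ι := Fin a) (bernTwoPow j)
    (fun ξ : Γ → Bool => Odd #{u | ξ u = true}) (Set.toFinite _).measurableSet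

/-- Each of the `d = deg(v)` neighbors independently lies in `V_{i,j}`
with probability `2^{-j}`; `y_{i,j}` is the indicator that `|V_{i,j} ∩ Γ(v)|` is
odd.  Then `P(y_{i,j} = 1) = (1 − (1 − 2^{-j+1})^d)/2`, and consequently
`E[SUM(j,v)] = a·(1 − (1 − 2^{-j+1})^d)/2` where `SUM(j,v) = Σ_{i=1}^a y_{i,j}`. -/
theorem degree_approx_parity_expectation (Γ : Type*) [Fintype Γ] (d a j : ℕ)
    (hd : d = Fintype.card Γ) (hd1 : 1 ≤ d) (hj : 1 ≤ j) (ha : 1 ≤ a) :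
    (Measure.pi fun _ : Γ => bernTwoPow j)
        {ω | Odd (Finset.univ.filter (fun u : Γ => ω u = true)).card}
      = ENNReal.ofReal ((1 - (1 - (2 : ℝ) ^ (1 - (j : ℝ))) ^ d) / 2) ∧
    (∫ ω : Fin a × Γ → Bool,
        ((Finset.univ.filter (fun i : Fin a =>
          Odd (Finset.univ.filter (fun u : Γ => ω (i, u) = true)).card)).card : ℝ)
        ∂(Measure.pi fun _ : Fin a × Γ => bernTwoPow j))
      = (a : ℝ) * ((1 - (1 - (2 : ℝ) ^ (1 - (j : ℝ))) ^ d) / 2) :=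
  degree_approx_parity_expectation_general Γ d a j hd
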